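/- arXiv:2402.09115 — 8 statements merged into one kernel-verified Lean document; each statement's English description precedes it below -/
import Mathlib

section
/- Let n ≥ 2 be a natural number and let M be an n×n doubly stochastic real matrix with M i j > 0 for every pair of indices i ≠ j. Then for every real R ≥ 0 and every representation M = Σ_{k=1}^{v} β_k • P_{σ_k} with positive reals β_k and permutations σ_k of Fin n, the completion time of the corresponding BvN schedule satisfies Σ_{k=1}^{v} β_k + v·R ≥ 1 + (n−1)·R. (Observation 1: the system DCT of BvN-sys is at least 1 + (n−1)R_b.) -/
open Matrix BigOperators

/-- The permutation matrix of `σ`: entry `(i,j)` is `1` iff `j = σ i`. -/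
def permMatrix (n : ℕ) (σ : Equiv.Perm (Fin n)) : Matrix (Fin n) (Fin n) ℝ :=
  Matrix.of fun i j => if j = σ i then (1 : ℝ) else 0

/-- Observation 1: the system DCT of BvN-sys is at least `1 + (n-1)·R`. For any
doubly stochastic matrix with all off-diagonal entries positive, any BvN schedule
(decomposition into `v` permutation matrices with positive coefficients, each
reconfiguration costing `R ≥ 0`) has completion time `∑ β + v·R ≥ 1 + (n-1)·R`. -/
theorem bvn_sys_dct_lower_bound (n : ℕ) (hn : 2 ≤ n)
    (M : Matrix (Fin n) (Fin n) ℝ)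
    (hnonneg : ∀ i j, 0 ≤ M i j)
    (hrow : ∀ i, ∑ j, M i j = 1)
    (hcol : ∀ j, ∑ i, M i j = 1)
    (hpos : ∀ i j, i ≠ j → 0 < M i j)
    (R : ℝ) (hR : 0 ≤ R)
    (v : ℕ) (β : Fin v → ℝ) (hβ : ∀ k, 0 < β k)
    (σ : Fin v → Equiv.Perm (Fin n))
    (hdecomp : M = ∑ k, β k • permMatrix n (σ k)) :
    1 + ((n : ℝ) - 1) * R ≤ (∑ k, β k) + (v : ℝ) * R := by
  have hz : (0 : ℕ) < n := by omega
  set z : Fin n := ⟨0, hz⟩ with hzdef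
  -- entries of M
  have hentry : ∀ i j, M i j = ∑ k, β k * (if j = σ k i then (1:ℝ) else 0) := by
    intro i j
    rw [hdecomp]
    simp [permMatrix, Matrix.sum_apply]
  -- Step 1: ∑ β = 1
  have hsum : ∑ k, β k = 1 := by
    have := hrow z
    calc ∑ k, β k = ∑ k, ∑ j, β k * (if j = σ k z then (1:ℝ) else 0) := by
          refine Finset.sum_congr rfl fun k _ => ?_
          simp
      _ = ∑ j, M z j := by
          rw [Finset.sum_comm]
          exact (Finset.sum_congr rfl fun j _ => (hentry z j).symm)
      _ = 1 := this
  -- Step 2: for each j ≠ z, ∃ k with σ k z = j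
  have hcover : ∀ j : Fin n, j ≠ z → ∃ k, σ k z = j := by
    intro j hj
    by_contra h
    push_neg at h
    have hMzero : M z j = 0 := by
      rw [hentry z j]
      apply Finset.sum_eq_zero
      intro k _
      have : j ≠ σ k z := fun he => h k he.symm
      simp [this]
    have := hpos z j (Ne.symm hj)
    linarith
  -- Step 3: n - 1 ≤ v
  have hcard : n - 1 ≤ v := by
    have hsub : (Finset.univ.erase z) ⊆ Finset.univ.image (fun k => σ k z) := by
      intro j hj
      obtain ⟨k, hk⟩ := hcover j (Finset.ne_of_mem_erase hj)
      exact Finset.mem_image.2 ⟨k, Finset.mem_univ k, hk⟩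
    have h1 := Finset.card_le_card hsub
    have h2 := Finset.card_image_le (s := (Finset.univ : Finset (Fin v)))
      (f := fun k => σ k z)
    simp [Finset.card_erase_of_mem, Finset.card_univ] at h1 h2
    omega
  have hcard' : (n : ℝ) - 1 ≤ (v : ℝ) := by
    have : ((n - 1 : ℕ) : ℝ) ≤ (v : ℝ) := by exact_mod_cast hcard
    have h1 : ((n - 1 : ℕ) : ℝ) = (n : ℝ) - 1 := by
      have : 1 ≤ n := by omega
      push_cast [this]
      ring
    linarith
  rw [hsum]
  nlinarith [mul_le_mul_of_nonneg_right hcard' hR]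
end

section
/- Let n ≥ 2 be a natural number and let M be an n×n doubly stochastic real matrix with M i j > 0 for every pair of indices i ≠ j. If M = Σ_{k=1}^{v} β_k • P_{σ_k} for positive reals β_k and permutations σ_k of Fin n, then v ≥ n − 1. (Any Birkhoff–von Neumann decomposition of a matrix with all off-diagonal entries positive uses at least n−1 permutations.) -/
open Matrix BigOperators

/-- Any Birkhoff–von Neumann decomposition of a doubly stochastic matrix
with all off-diagonal entries positive uses at least `n - 1` permutations. -/
theorem bvn_decomposition_length_lower_bound (n : ℕ) (hn : 2 ≤ n)
    (M : Matrix (Fin n) (Fin n) ℝ)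
    (hnonneg : ∀ i j, 0 ≤ M i j)
    (hrow : ∀ i, ∑ j, M i j = 1)
    (hcol : ∀ j, ∑ i, M i j = 1)
    (hpos : ∀ i j, i ≠ j → 0 < M i j)
    (v : ℕ) (β : Fin v → ℝ) (hβ : ∀ k, 0 < β k)
    (σ : Fin v → Equiv.Perm (Fin n))
    (hdecomp : M = ∑ k, β k • permMatrix n (σ k)) :
    n - 1 ≤ v := by
  haveI : NeZero n := ⟨by omega⟩
  have key : ∀ j : Fin n, j ≠ 0 → ∃ k : Fin v, σ k 0 = j := by
    intro j hj
    by_contra h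
    push_neg at h
    have hp := hpos 0 j (Ne.symm hj)
    rw [hdecomp] at hp
    have hz : (∑ k, β k • permMatrix n (σ k)) 0 j = 0 := by
      rw [Matrix.sum_apply]
      simp only [Matrix.smul_apply, permMatrix, Matrix.of_apply, smul_eq_mul]
      apply Finset.sum_eq_zero
      intro k _
      rw [if_neg (fun hh => h k hh.symm), mul_zero]
    rw [hz] at hp
    exact lt_irrefl 0 hp
  choose f hf using key
  have hinj : Function.Injective (fun j : {j : Fin n // j ≠ 0} => f j j.2) := by
    intro a b hab
    ext
    rw [← hf a a.2, ← hf b b.2]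
    simp only at hab
    rw [hab]
  have hcard := Fintype.card_le_of_injective _ hinj
  have : Fintype.card {j : Fin n // j ≠ 0} = n - 1 := by
    have := Fintype.card_subtype_compl (fun j : Fin n => j = 0)
    simp only [Fintype.card_subtype_eq, Fintype.card_fin] at this
    exact this
  rw [this, Fintype.card_fin] at hcard
  exact hcard
end

section
/- Let n ≥ 3 be a natural number, σ a derangement of Fin n, and λ > 0 a real number. Let A and B be n×n real matrices with nonnegative entries such that A i j = 0 whenever j ≠ σ(i), and B i j = 0 whenever i = j or j = σ(i). If ‖A‖ + ‖B‖/2 = λ·n, then (n−1) · max_{i,j} (A + B) i j ≥ (2 − 2/n)·λ. (Theorem 1, lower bound for the rr-sys DCT on a scaled derangement permutation demand matrix: A records traffic sent directly on the permutation's edges, B records the per-edge load of traffic sent over two hops, so each indirectly sent unit contributes twice to B; the completion time is at least (n−1) times the maximal per-edge load.) -/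
open Finset

/- Every row of `A` carries at most one nonzero entry and every row of `B` at most `n - 2`, so
with `M` the largest entry of `A + B` the completeness identity gives
`λ n = ‖A‖ + ‖B‖/2 ≤ n M + n (n - 2) M / 2 = n² M / 2`, i.e. `2λ ≤ n M`; multiplying by
`(n - 1)/n` yields the bound. -/

theorem Matrix.apply_le_iSup_iSup {α m n : Type*} [ConditionallyCompleteLattice α]
    [Finite m] [Finite n] (M : Matrix m n α) (i : m) (j : n) : M i j ≤ ⨆ i, ⨆ j, M i j :=
  (le_ciSup (Set.finite_range _).bddAbove j).trans
    (le_ciSup (f := fun i ↦ ⨆ j, M i j) (Set.finite_range _).bddAbove i)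

theorem Finset.sum_le_card_mul_of_eq_zero_of_notMem {ι : Type*} [Fintype ι] {s : Finset ι}
    {f : ι → ℝ} {c : ℝ} (h0 : ∀ i ∉ s, f i = 0) (hc : ∀ i ∈ s, f i ≤ c) :
    ∑ i, f i ≤ #s * c := by
  rw [← sum_subset (subset_univ s) fun i _ hi ↦ h0 i hi]
  simpa using sum_le_card_nsmul s f c hc

section RowSums

variable {ι : Type*} [Fintype ι] {σ : Equiv.Perm ι} {A B : Matrix ι ι ℝ} {M : ℝ}

theorem row_sum_le_of_eq_zero_off_perm (hAsupp : ∀ i j, j ≠ σ i → A i j = 0)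
    (hAM : ∀ i j, A i j ≤ M) (i : ι) : ∑ j, A i j ≤ M := by
  simpa using sum_le_card_mul_of_eq_zero_of_notMem (s := {σ i})
    (fun j hj ↦ hAsupp i j (by simpa using hj)) (fun j _ ↦ hAM i j)

theorem row_sum_le_of_eq_zero_on_diag_and_perm (hσ : ∀ i, σ i ≠ i)
    (hBsupp : ∀ i j, i = j ∨ j = σ i → B i j = 0) (hBM : ∀ i j, B i j ≤ M) (i : ι) :
    ∑ j, B i j ≤ (Fintype.card ι - 2 : ℝ) * M := by
  classical
  have hcard : #({i, σ i}ᶜ : Finset ι) = Fintype.card ι - 2 := by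
    rw [card_compl, card_pair (hσ i).symm]
  have htwo : 2 ≤ Fintype.card ι := by
    simpa [card_pair (hσ i).symm] using card_le_univ ({i, σ i} : Finset ι)
  have hsum := sum_le_card_mul_of_eq_zero_of_notMem (s := {i, σ i}ᶜ) (f := B i)
    (fun j hj ↦ hBsupp i j (by simpa [eq_comm, or_iff_not_imp_left] using hj))
    (fun j _ ↦ hBM i j)
  rwa [hcard, Nat.cast_sub htwo, Nat.cast_two] at hsum

theorem weight_add_half_weight_le (hσ : ∀ i, σ i ≠ i)
    (hAsupp : ∀ i j, j ≠ σ i → A i j = 0) (hBsupp : ∀ i j, i = j ∨ j = σ i → B i j = 0)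
    (hAM : ∀ i j, A i j ≤ M) (hBM : ∀ i j, B i j ≤ M) :
    (∑ i, ∑ j, A i j) + (∑ i, ∑ j, B i j) / 2 ≤ (Fintype.card ι : ℝ) ^ 2 * M / 2 := by
  have hA := sum_le_sum fun i (_ : i ∈ univ) ↦ row_sum_le_of_eq_zero_off_perm hAsupp hAM i
  have hB := sum_le_sum fun i (_ : i ∈ univ) ↦
    row_sum_le_of_eq_zero_on_diag_and_perm hσ hBsupp hBM i
  simp only [sum_const, card_univ, nsmul_eq_mul] at hA hB
  linarith

end RowSums

theorem rr_sys_dct_lower_bound_perm_general (n : ℕ) (hn : 3 ≤ n)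
    (σ : Equiv.Perm (Fin n)) (hσ : ∀ i, σ i ≠ i)
    (lam : ℝ)
    (A B : Matrix (Fin n) (Fin n) ℝ)
    (hA : ∀ i j, 0 ≤ A i j) (hB : ∀ i j, 0 ≤ B i j)
    (hAsupp : ∀ i j, j ≠ σ i → A i j = 0)
    (hBsupp : ∀ i j, i = j ∨ j = σ i → B i j = 0)
    (hweight : (∑ i, ∑ j, A i j) + (∑ i, ∑ j, B i j) / 2 = lam * n) :
    (2 - 2 / (n : ℝ)) * lam ≤ ((n : ℝ) - 1) * (⨆ i, ⨆ j, (A + B) i j) := by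
  set M := ⨆ i, ⨆ j, (A + B) i j
  have hle (i j) : A i j + B i j ≤ M := (A + B).apply_le_iSup_iSup i j
  have hbound := weight_add_half_weight_le (M := M) hσ hAsupp hBsupp
    (fun i j ↦ by linarith [hle i j, hB i j]) (fun i j ↦ by linarith [hle i j, hA i j])
  rw [hweight, Fintype.card_fin] at hbound
  have hn1 : (1 : ℝ) ≤ n := Nat.one_le_cast.mpr (by omega)
  have hkey : 2 * lam ≤ n * M := by nlinarith
  calc (2 - 2 / (n : ℝ)) * lam = (n - 1) / n * (2 * lam) := by field_simp
    _ ≤ (n - 1) / n * (n * M) := by gcongr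
    _ = (n - 1) * M := by field_simp

/-- Theorem 1 (lower bound for the rr-sys system DCT on a scaled derangement
permutation demand matrix): if `A` is the direct one-hop traffic (supported on
the pairs `(i, σ i)`), `B` the per-edge load of two-hop traffic (supported off
the diagonal and off the permutation), and completeness forces
`‖A‖ + ‖B‖/2 = λ·n`, then the completion time, which is at least `(n-1)` times
the maximal per-edge load of `A + B`, is at least `(2 - 2/n)·λ`. -/
theorem rr_sys_dct_lower_bound_perm (n : ℕ) (hn : 3 ≤ n)
    (σ : Equiv.Perm (Fin n)) (hσ : ∀ i, σ i ≠ i)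
    (lam : ℝ) (hlam : 0 < lam)
    (A B : Matrix (Fin n) (Fin n) ℝ)
    (hA : ∀ i j, 0 ≤ A i j) (hB : ∀ i j, 0 ≤ B i j)
    (hAsupp : ∀ i j, j ≠ σ i → A i j = 0)
    (hBsupp : ∀ i j, i = j ∨ j = σ i → B i j = 0)
    (hweight : (∑ i, ∑ j, A i j) + (∑ i, ∑ j, B i j) / 2 = lam * n) :
    (2 - 2 / (n : ℝ)) * lam ≤ ((n : ℝ) - 1) * (⨆ i, ⨆ j, (A + B) i j) :=
  rr_sys_dct_lower_bound_perm_general n hn σ hσ lam A B hA hB hAsupp hBsupp hweight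
end

section
/- Let n ≥ 3 and 1 ≤ v ≤ n−2 be natural numbers, and let λ > 0 be a real number. Let S be a set of ordered pairs of indices in Fin n × Fin n containing no diagonal pair (i,i), such that for every row index i there are exactly v pairs of the form (i,j) in S. Let A and B be n×n real matrices with nonnegative entries such that A i j = 0 whenever (i,j) ∉ S, and B i j = 0 whenever i = j or (i,j) ∈ S. If ‖A‖ + ‖B‖/2 = λ·n, then (n−1) · max_{i,j} (A + B) i j ≥ (2 − 2v/(n−1+v))·λ. (Corollary 1: lower bound for the rr-sys DCT on demand matrices of type M(v).) -/
/-!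
Let `m` be the largest entry of `A + B`. Row `i` of `A` has at most `v` nonzero entries and row `i`
of `B` at most `n - 1 - v`, all bounded by `m`, so `λ n = ‖A‖ + ‖B‖/2 ≤ n m (v + (n - 1 - v)/2)`,
that is `2λ ≤ (n - 1 + v) m`; multiplying by `(n - 1)/(n - 1 + v)` gives the bound.
-/

open Matrix BigOperators Finset

theorem Finset.card_filter_prodMk_mem {α β : Type*} [DecidableEq α] [DecidableEq β] [Fintype β]
    (S : Finset (α × β)) (a : α) :
    #{b | (a, b) ∈ S} = #{p ∈ S | p.1 = a} :=
  card_nbij' (Prod.mk a) Prod.snd (by intro b; simp)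
    (by rintro ⟨_, b⟩ hp; obtain ⟨hS, rfl⟩ := mem_filter.1 hp; simpa using hS)
    (by intro b; simp) (by rintro ⟨_, b⟩; simp +contextual)

theorem Fintype.sum_le_card_nsmul_of_eq_zero_off {ι M : Type*} [Fintype ι] [AddCommMonoid M]
    [Preorder M] [AddLeftMono M] (s : Finset ι) (f : ι → M) (m : M)
    (hf : ∀ j ∉ s, f j = 0) (hm : ∀ j ∈ s, f j ≤ m) : ∑ j, f j ≤ #s • m := by
  rw [← Finset.sum_subset (subset_univ s) fun j _ hj => hf j hj]
  exact sum_le_card_nsmul s f m hm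

theorem Finset.cast_card_compl_insert {α R : Type*} [DecidableEq α] [Fintype α]
    [AddCommGroupWithOne R]
    {s : Finset α} {a : α} (ha : a ∉ s) :
    (#(insert a s)ᶜ : R) = Fintype.card α - 1 - #s := by
  have h := card_add_card_compl (insert a s)
  rw [card_insert_of_notMem ha] at h
  rw [← h]
  push_cast
  abel

theorem Matrix.le_iSup_iSup {ι κ : Type*} [Finite ι] [Finite κ] (M : Matrix ι κ ℝ) (i : ι) (j : κ) :
    M i j ≤ ⨆ i, ⨆ j, M i j :=
  le_ciSup_of_le (Set.finite_range _).bddAbove i (le_ciSup (Set.finite_range _).bddAbove j)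

section RowSums

variable {ι : Type*} [Fintype ι] [DecidableEq ι] {S : Finset (ι × ι)} {v : ℕ} {m : ℝ}

theorem sum_row_le_of_support (hSrow : ∀ i, #{p ∈ S | p.1 = i} = v) {A : Matrix ι ι ℝ}
    (hAsupp : ∀ i j, (i, j) ∉ S → A i j = 0) (hAm : ∀ i j, A i j ≤ m) (i : ι) :
    ∑ j, A i j ≤ v * m := by
  have h := Fintype.sum_le_card_nsmul_of_eq_zero_off {j | (i, j) ∈ S} (A i) m
    (fun j hj => hAsupp i j (by simpa using hj)) (fun j _ => hAm i j)
  rwa [card_filter_prodMk_mem, hSrow, nsmul_eq_mul] at h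

theorem sum_row_le_off_support (hSdiag : ∀ i, (i, i) ∉ S) (hSrow : ∀ i, #{p ∈ S | p.1 = i} = v)
    {B : Matrix ι ι ℝ} (hBsupp : ∀ i j, i = j ∨ (i, j) ∈ S → B i j = 0) (hBm : ∀ i j, B i j ≤ m)
    (i : ι) : ∑ j, B i j ≤ (Fintype.card ι - 1 - v) * m := by
  have hi : i ∉ ({j | (i, j) ∈ S} : Finset ι) := by simpa using hSdiag i
  have h := Fintype.sum_le_card_nsmul_of_eq_zero_off
    (insert i ({j | (i, j) ∈ S} : Finset ι))ᶜ (B i) m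
    (fun j hj => hBsupp i j (by simpa [eq_comm, or_iff_not_imp_left] using hj))
    (fun j _ => hBm i j)
  rwa [nsmul_eq_mul, cast_card_compl_insert hi, card_filter_prodMk_mem, hSrow] at h

theorem weight_le_of_entry_le (hSdiag : ∀ i, (i, i) ∉ S) (hSrow : ∀ i, #{p ∈ S | p.1 = i} = v)
    {A B : Matrix ι ι ℝ} (hAsupp : ∀ i j, (i, j) ∉ S → A i j = 0)
    (hBsupp : ∀ i j, i = j ∨ (i, j) ∈ S → B i j = 0)
    (hAm : ∀ i j, A i j ≤ m) (hBm : ∀ i j, B i j ≤ m) :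
    (∑ i, ∑ j, A i j) + (∑ i, ∑ j, B i j) / 2
      ≤ Fintype.card ι * ((Fintype.card ι - 1 + v) / 2 * m) := by
  have hA := sum_le_sum fun i (_ : i ∈ univ) => sum_row_le_of_support hSrow hAsupp hAm i
  have hB := sum_le_sum fun i (_ : i ∈ univ) =>
    sum_row_le_off_support hSdiag hSrow hBsupp hBm i
  simp only [sum_const, card_univ, nsmul_eq_mul] at hA hB
  linarith

end RowSums

theorem rr_sys_dct_lower_bound_Mv_general (n v : ℕ) (hn : 3 ≤ n)
    (lam : ℝ)
    (S : Finset (Fin n × Fin n))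
    (hSdiag : ∀ i : Fin n, (i, i) ∉ S)
    (hSrow : ∀ i : Fin n, (S.filter (fun p => p.1 = i)).card = v)
    (A B : Matrix (Fin n) (Fin n) ℝ)
    (hA : ∀ i j, 0 ≤ A i j) (hB : ∀ i j, 0 ≤ B i j)
    (hAsupp : ∀ i j, (i, j) ∉ S → A i j = 0)
    (hBsupp : ∀ i j, i = j ∨ (i, j) ∈ S → B i j = 0)
    (hweight : (∑ i, ∑ j, A i j) + (∑ i, ∑ j, B i j) / 2 = lam * n) :
    (2 - 2 * (v : ℝ) / ((n : ℝ) - 1 + v)) * lam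
      ≤ ((n : ℝ) - 1) * (⨆ i, ⨆ j, (A + B) i j) := by
  set m := ⨆ i, ⨆ j, (A + B) i j
  have hAm : ∀ i j, A i j ≤ m := fun i j =>
    (le_add_of_nonneg_right (hB i j)).trans ((A + B).le_iSup_iSup i j)
  have hBm : ∀ i j, B i j ≤ m := fun i j =>
    (le_add_of_nonneg_left (hA i j)).trans ((A + B).le_iSup_iSup i j)
  have hbound := weight_le_of_entry_le hSdiag hSrow hAsupp hBsupp hAm hBm
  rw [hweight, Fintype.card_fin, mul_comm] at hbound
  have hnR : (3 : ℝ) ≤ n := by exact_mod_cast hn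
  have hlam_le : lam ≤ (n - 1 + v) / 2 * m := le_of_mul_le_mul_left hbound (by linarith)
  have hc : (0 : ℝ) < n - 1 + v := by linarith [v.cast_nonneg (α := ℝ)]
  rw [show 2 - 2 * (v : ℝ) / (n - 1 + v) = 2 * (n - 1) / (n - 1 + v) by field_simp; ring,
    div_mul_eq_mul_div, div_le_iff₀ hc]
  nlinarith

/-- Corollary 1 (lower bound for the rr-sys DCT on demand matrices of type
`M(v)`): `S` is the support of the demand, consisting of exactly `v`
off-diagonal cells in each row; `A` is the direct one-hop traffic (supported on
`S`), `B` the per-edge load of two-hop traffic (supported off `S` and off the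
diagonal). Completeness forces `‖A‖ + ‖B‖/2 = λ·n`, and the completion time,
which is at least `(n-1)` times the maximal per-edge load of `A + B`, is at
least `(2 - 2v/(n-1+v))·λ`. -/
theorem rr_sys_dct_lower_bound_Mv (n v : ℕ) (hn : 3 ≤ n)
    (hv1 : 1 ≤ v) (hv2 : v ≤ n - 2)
    (lam : ℝ) (hlam : 0 < lam)
    (S : Finset (Fin n × Fin n))
    (hSdiag : ∀ i : Fin n, (i, i) ∉ S)
    (hSrow : ∀ i : Fin n, (S.filter (fun p => p.1 = i)).card = v)
    (A B : Matrix (Fin n) (Fin n) ℝ)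
    (hA : ∀ i j, 0 ≤ A i j) (hB : ∀ i j, 0 ≤ B i j)
    (hAsupp : ∀ i j, (i, j) ∉ S → A i j = 0)
    (hBsupp : ∀ i j, i = j ∨ (i, j) ∈ S → B i j = 0)
    (hweight : (∑ i, ∑ j, A i j) + (∑ i, ∑ j, B i j) / 2 = lam * n) :
    (2 - 2 * (v : ℝ) / ((n : ℝ) - 1 + v)) * lam
      ≤ ((n : ℝ) - 1) * (⨆ i, ⨆ j, (A + B) i j) :=
  rr_sys_dct_lower_bound_Mv_general n v hn lam S hSdiag hSrow A B hA hB hAsupp hBsupp hweight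
end

section
/- Let n ≥ 2 be a natural number and R_b > 0 a real number. Then for every real v > 0, min(1 + R_b·v, (n−1)/v) ≤ (√(1 + 4R_b(n−1)) + 1)/2, and equality holds for v = (√(1 + 4R_b(n−1)) − 1)/(2R_b). (Theorem 8, third bullet: the system DCT of comp-sys over the family M(v) is at most (√(1+4R_b(n−1))+1)/2, with the worst case attained at v = v̈.) -/
/-- Theorem 8, third bullet: the system DCT of comp-sys over the family `M(v)`
(with the DCT on `M(v)` being `min (1 + R_b·v) ((n-1)/v)`) is at most
`(√(1 + 4R_b(n-1)) + 1)/2`, with the worst case attained at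
`v̈ = (√(1 + 4R_b(n-1)) - 1)/(2R_b)`. -/
theorem comp_sys_system_dct_Mv (n : ℕ) (hn : 2 ≤ n) (R : ℝ) (hR : 0 < R) :
    (∀ v : ℝ, 0 < v →
      min (1 + R * v) (((n : ℝ) - 1) / v)
        ≤ (Real.sqrt (1 + 4 * R * ((n : ℝ) - 1)) + 1) / 2) ∧
    min (1 + R * ((Real.sqrt (1 + 4 * R * ((n : ℝ) - 1)) - 1) / (2 * R)))
        (((n : ℝ) - 1) / ((Real.sqrt (1 + 4 * R * ((n : ℝ) - 1)) - 1) / (2 * R)))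
      = (Real.sqrt (1 + 4 * R * ((n : ℝ) - 1)) + 1) / 2 := by
  have hn1 : (1:ℝ) ≤ (n:ℝ) - 1 := by
    have : (2:ℝ) ≤ (n:ℝ) := by exact_mod_cast hn
    linarith
  set s := Real.sqrt (1 + 4 * R * ((n : ℝ) - 1)) with hs
  have hA : (1:ℝ) < 1 + 4 * R * ((n:ℝ) - 1) := by nlinarith
  have hs2 : s ^ 2 = 1 + 4 * R * ((n:ℝ) - 1) :=
    Real.sq_sqrt (by linarith)
  have hs1 : 1 < s := by
    rw [hs]
    exact (Real.lt_sqrt one_pos.le).mpr (by nlinarith)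
  have hv : (0:ℝ) < (s - 1) / (2 * R) := div_pos (by linarith) (by linarith)
  constructor
  · intro v hv0
    rcases le_or_gt (1 + R * v) ((s + 1) / 2) with h | h
    · exact le_trans (min_le_left _ _) h
    · refine le_trans (min_le_right _ _) ?_
      rw [div_le_iff₀ hv0]
      have hkey : (0:ℝ) ≤ (s + 1) * (R * v - (s - 1) / 2) :=
        mul_nonneg (by linarith) (by linarith)
      nlinarith [hkey, hs2, hR]
  · have h1 : 1 + R * ((s - 1) / (2 * R)) = (s + 1) / 2 := by
      field_simp; ring
    have h2 : ((n:ℝ) - 1) / ((s - 1) / (2 * R)) = (s + 1) / 2 := by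
      rw [div_eq_iff (ne_of_gt hv)]
      field_simp
      nlinarith
    rw [h1, h2, min_self]
end

section
/- Let n ≥ 3 be a natural number and R_b a real number with 0 < R_b < (2n−4)/n². Then (√(1 + 4R_b(n−1)) + 1)/2 < min(1 + (n−1)·R_b, 2 − 2/n). (Observation: the system DCT of comp-sys is strictly lower than the system DCTs of both BvN-sys and rr-sys.) -/
/-- Observation: for `0 < R_b < (2n-4)/n²`, the system DCT of comp-sys,
`(√(1 + 4R_b(n-1)) + 1)/2`, is strictly lower than both the system DCT of
BvN-sys, `1 + (n-1)·R_b`, and that of rr-sys, `2 - 2/n`. -/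
theorem comp_sys_strictly_better (n : ℕ) (hn : 3 ≤ n) (R : ℝ)
    (hR0 : 0 < R) (hR1 : R < (2 * (n : ℝ) - 4) / (n : ℝ) ^ 2) :
    (Real.sqrt (1 + 4 * R * ((n : ℝ) - 1)) + 1) / 2
      < min (1 + ((n : ℝ) - 1) * R) (2 - 2 / (n : ℝ)) := by
  have hn3 : (3 : ℝ) ≤ (n : ℝ) := by exact_mod_cast hn
  have hnpos : (0 : ℝ) < (n : ℝ) := by linarith
  have hRn : R * (n : ℝ) ^ 2 < 2 * (n : ℝ) - 4 :=
    (lt_div_iff₀ (by positivity : (0:ℝ) < (n : ℝ) ^ 2)).mp hR1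
  rw [lt_min_iff]
  constructor
  · have h1 : Real.sqrt (1 + 4 * R * ((n : ℝ) - 1)) < 1 + 2 * R * ((n : ℝ) - 1) := by
      rw [Real.sqrt_lt' (by nlinarith)]
      nlinarith [mul_pos hR0 (by linarith : (0:ℝ) < (n:ℝ) - 1)]
    linarith
  · have h2 : Real.sqrt (1 + 4 * R * ((n : ℝ) - 1)) < 3 - 4 / (n : ℝ) := by
      rw [Real.sqrt_lt' (by
        have : 4 / (n : ℝ) ≤ 4 / 3 := by
          apply div_le_div_of_nonneg_left <;> linarith
        linarith)]
      have h4 : 4 / (n : ℝ) * (n : ℝ) = 4 := by field_simp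
      nlinarith [sq_nonneg ((n:ℝ) - 2), mul_pos hnpos hnpos]
    have h42 : 4 / (n : ℝ) = 2 * (2 / (n : ℝ)) := by ring
    linarith
end

section
/- Let n ≥ 2 be a natural number and R_b > 0 a real number. Then the set { min(1 + R_b·v, min(2 − 2/n, (n−1)/v)) : v ∈ ℝ, v > 0 } has greatest element min(2 − 2/n, (√(1 + 4R_b(n−1)) + 1)/2); that is, every element of the set is at most this value and the value is attained for some v > 0. (Unified system-DCT formula for comp-sys on the family M(v), covering both regimes of R_b in Theorem 12 of the appendix.) -/
theorem min_le_of_monotoneOn_of_antitoneOn {α β : Type*} [LinearOrder α] [LinearOrder β]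
    {f g : α → β} {s : Set α} (hf : MonotoneOn f s) (hg : AntitoneOn g s)
    {a b : α} (ha : a ∈ s) (hb : b ∈ s) (hfg : f a = g a) : min (f b) (g b) ≤ f a := by
  rcases le_total b a with hba | hab
  · exact (min_le_left _ _).trans (hf hb ha hba)
  · exact (min_le_right _ _).trans (hfg ▸ hg ha hb hab)

/-- `c = (√(1 + 4Rm) + 1) / 2` is the root of `c (c - 1) = R m` exceeding `1`, so at `v = (c - 1) / R`
the increasing `1 + R v` and the decreasing `m / v` both equal `c`. -/
theorem isGreatest_min_one_add_mul_div {R m : ℝ} (hR : 0 < R) (hm : 0 < m) :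
    IsGreatest {x : ℝ | ∃ v : ℝ, 0 < v ∧ x = min (1 + R * v) (m / v)}
      ((√(1 + 4 * R * m) + 1) / 2) := by
  set c := (√(1 + 4 * R * m) + 1) / 2 with hc
  have hsq : √(1 + 4 * R * m) ^ 2 = 1 + 4 * R * m := Real.sq_sqrt (by positivity)
  have hc1 : 1 < c := by
    have : 1 < √(1 + 4 * R * m) := by nlinarith [Real.sqrt_nonneg (1 + 4 * R * m)]
    linarith
  have hroot : c * (c - 1) = R * m := by rw [hc]; nlinarith
  set v := (c - 1) / R
  have hv : 0 < v := div_pos (by linarith) hR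
  have hline : 1 + R * v = c := by rw [mul_div_cancel₀ _ hR.ne']; ring
  have hdiv : m / v = c := by
    rw [div_eq_iff hv.ne', ← mul_div_assoc, eq_div_iff hR.ne']
    linarith
  have hmono : MonotoneOn (fun w : ℝ => 1 + R * w) (Set.Ioi 0) :=
    fun _ _ _ _ hab => by dsimp only; gcongr
  have hanti : AntitoneOn (fun w : ℝ => m / w) (Set.Ioi 0) :=
    fun _ ha _ _ hab => div_le_div_of_nonneg_left hm.le ha hab
  refine ⟨⟨v, hv, by rw [hline, hdiv, min_self]⟩, ?_⟩
  rintro x ⟨w, hw, rfl⟩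
  exact hline ▸ min_le_of_monotoneOn_of_antitoneOn hmono hanti hv hw (hline.trans hdiv.symm)

/-- Unified system-DCT formula for comp-sys on the family `M(v)`: the set of
values `min (1 + R_b·v) (min (2 - 2/n) ((n-1)/v))` over positive real `v` has
greatest element `min (2 - 2/n) ((√(1 + 4R_b(n-1)) + 1)/2)`. -/
theorem comp_sys_system_dct_unified (n : ℕ) (hn : 2 ≤ n) (R : ℝ) (hR : 0 < R) :
    IsGreatest
      {x : ℝ | ∃ v : ℝ, 0 < v ∧
        x = min (1 + R * v) (min (2 - 2 / (n : ℝ)) (((n : ℝ) - 1) / v))}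
      (min (2 - 2 / (n : ℝ)) ((Real.sqrt (1 + 4 * R * ((n : ℝ) - 1)) + 1) / 2)) := by
  have hm : (0 : ℝ) < n - 1 := by
    have : (2 : ℝ) ≤ n := by exact_mod_cast hn
    linarith
  have hset : {x : ℝ | ∃ v : ℝ, 0 < v ∧
        x = min (1 + R * v) (min (2 - 2 / (n : ℝ)) (((n : ℝ) - 1) / v))} =
      min (2 - 2 / (n : ℝ)) '' {x : ℝ | ∃ v : ℝ, 0 < v ∧ x = min (1 + R * v) ((n - 1) / v)} := by
    ext x
    constructor
    · rintro ⟨v, hv, rfl⟩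
      exact ⟨_, ⟨v, hv, rfl⟩, min_left_comm _ _ _⟩
    · rintro ⟨_, ⟨v, hv, rfl⟩, rfl⟩
      exact ⟨v, hv, min_left_comm _ _ _⟩
  rw [hset]
  exact (monotone_const.min monotone_id).map_isGreatest (isGreatest_min_one_add_mul_div hR hm)
end

section
/- Let n, w, v be real numbers with v > 0 and n − w − v > 0. Then for every real φ with 0 ≤ φ ≤ 1, max(φ/v, 2(1−φ)/(n−w−v)) ≥ 2/(n−w+v); moreover φ* = 2v/(n−w+v) satisfies 0 ≤ φ* ≤ 1 and max(φ*/v, 2(1−φ*)/(n−w−v)) = 2/(n−w+v). (Theorem 10: the skewness φ of an optimal complete traffic schedule for a demand matrix of type M(v) on rr-sys is at most 2v/(n−w+v).) -/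
/-! Put `a = v` and `b = (n - w - v) / 2`, so that the two loads are `φ / a` and `(1 - φ) / b`
and `2 / (n - w + v) = 1 / (a + b)`. Their average weighted by `a` and `b` is
`(φ + (1 - φ)) / (a + b) = 1 / (a + b)`, so the larger one is at least that, with equality
exactly when both loads agree, i.e. at `φ = a / (a + b)`. -/

section BalancedSplit

variable {a b : ℝ}

theorem one_div_add_le_max_div_div (ha : 0 < a) (hb : 0 < b) (φ : ℝ) :
    1 / (a + b) ≤ max (φ / a) ((1 - φ) / b) := by
  set m := max (φ / a) ((1 - φ) / b)
  have hweighted : 1 ≤ (a + b) * m :=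
    calc 1 = a * (φ / a) + b * ((1 - φ) / b) := by field_simp; ring
      _ ≤ a * m + b * m := by gcongr <;> simp [m]
      _ = (a + b) * m := by ring
  rw [div_le_iff₀ (by positivity)]
  linarith

theorem max_div_div_eq_one_div_add (ha : 0 < a) (hb : 0 < b) :
    max (a / (a + b) / a) ((1 - a / (a + b)) / b) = 1 / (a + b) := by
  have hleft : a / (a + b) / a = 1 / (a + b) := by field_simp
  have hright : (1 - a / (a + b)) / b = 1 / (a + b) := by field_simp; ring
  rw [hleft, hright, max_self]

end BalancedSplit

/-- Theorem 10: the skewness `φ` of an optimal complete traffic schedule for a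
demand of type `M(v)` on rr-sys (with `w` inactive cells per row) is at most
`2v/(n-w+v)`: every `φ ∈ [0,1]` gives a worst per-edge load of at least
`2/(n-w+v)`, and `φ* = 2v/(n-w+v)` lies in `[0,1]` and attains this value. -/
theorem skewness_upper_bound_Mv (n w v : ℝ) (hv : 0 < v) (h : 0 < n - w - v) :
    (∀ φ : ℝ, 0 ≤ φ → φ ≤ 1 →
      2 / (n - w + v) ≤ max (φ / v) (2 * (1 - φ) / (n - w - v))) ∧
    (0 ≤ 2 * v / (n - w + v) ∧ 2 * v / (n - w + v) ≤ 1 ∧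
      max ((2 * v / (n - w + v)) / v)
          (2 * (1 - 2 * v / (n - w + v)) / (n - w - v))
        = 2 / (n - w + v)) := by
  have hD : n - w + v ≠ 0 := by linarith
  have hb : 0 < (n - w - v) / 2 := by positivity
  have hbound : 2 / (n - w + v) = 1 / (v + (n - w - v) / 2) := by field_simp; ring
  have hload (φ : ℝ) : 2 * (1 - φ) / (n - w - v) = (1 - φ) / ((n - w - v) / 2) := by
    field_simp
  have hopt : 2 * v / (n - w + v) = v / (v + (n - w - v) / 2) := by field_simp; ring
  refine ⟨fun φ _ _ => ?_, ?_, ?_, ?_⟩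
  · rw [hbound, hload]
    exact one_div_add_le_max_div_div hv hb φ
  · rw [hopt]
    positivity
  · rw [hopt, div_le_one (by positivity)]
    linarith
  · rw [hload, hopt, hbound]
    exact max_div_div_eq_one_div_add hv hb
end
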